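/- The sequence k_n^− is strictly increasing in n: for every integer n ≥ 3, k_{n+1}^− > k_n^−. -/

import Mathlib

/-- `k_n^− = (1/(4π))·ln((1+cos(π/n))/(1−cos(π/n))) + 1/(4n·sin(π/n))` -/
noncomputable def knMinus (n : ℕ) : ℝ :=
  (1 / (4 * Real.pi)) *
      Real.log ((1 + Real.cos (Real.pi / n)) / (1 - Real.cos (Real.pi / n))) +
    1 / (4 * n * Real.sin (Real.pi / n))

/-!
Writing `x = π / n`, one has `4π · k_n^− = log ((1 + cos x) / (1 - cos x)) + x / sin x`, and the
derivative of the right-hand side is `-(sin x + x cos x) / sin² x`, which is negative on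
`(0, π/2]`. Since `π / n` decreases in `n`, the sequence increases.
-/

open Real Set

noncomputable def knMinusProfile (x : ℝ) : ℝ :=
  log ((1 + cos x) / (1 - cos x)) + x / sin x

lemma knMinus_eq_profile (n : ℕ) : knMinus n = (4 * π)⁻¹ * knMinusProfile (π / n) := by
  unfold knMinus knMinusProfile
  have := pi_ne_zero
  simp only [div_eq_mul_inv, mul_inv, one_mul]
  field_simp

lemma hasDerivAt_log_one_add_cos_div_one_sub_cos {x : ℝ} (hx : sin x ≠ 0) :
    HasDerivAt (fun y => log ((1 + cos y) / (1 - cos y))) (-2 / sin x) x := by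
  have hsq := sin_sq_add_cos_sq x
  have h1 : 1 + cos x ≠ 0 := fun h => hx (by nlinarith)
  have h2 : 1 - cos x ≠ 0 := fun h => hx (by nlinarith)
  have hq : HasDerivAt (fun y => (1 + cos y) / (1 - cos y))
      ((-sin x * (1 - cos x) - (1 + cos x) * sin x) / (1 - cos x) ^ 2) x :=
    ((hasDerivAt_cos x).const_add 1).div (by simpa using (hasDerivAt_cos x).const_sub 1) h2
  refine (hq.log (div_ne_zero h1 h2)).congr_deriv ?_
  field_simp
  linear_combination -2 * hsq

lemma hasDerivAt_knMinusProfile {x : ℝ} (hx : sin x ≠ 0) :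
    HasDerivAt knMinusProfile (-(sin x + x * cos x) / sin x ^ 2) x := by
  refine ((hasDerivAt_log_one_add_cos_div_one_sub_cos hx).add
    ((hasDerivAt_id x).div (hasDerivAt_sin x) hx)).congr_deriv ?_
  simp only [id]
  field_simp
  ring

lemma strictAntiOn_knMinusProfile : StrictAntiOn knMinusProfile (Ioc 0 (π / 2)) := by
  have hsin : ∀ x ∈ Ioc 0 (π / 2), 0 < sin x := fun x hx =>
    sin_pos_of_pos_of_lt_pi hx.1 (hx.2.trans_lt (by linarith [pi_pos]))
  refine strictAntiOn_of_deriv_neg (convex_Ioc _ _)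
    (fun x hx => (hasDerivAt_knMinusProfile (hsin x hx).ne').continuousAt.continuousWithinAt)
    fun x hx => ?_
  rw [interior_Ioc] at hx
  have hs := hsin x (Ioo_subset_Ioc_self hx)
  have hc : 0 < cos x := cos_pos_of_mem_Ioo ⟨by linarith [hx.1, pi_pos], hx.2⟩
  rw [(hasDerivAt_knMinusProfile hs.ne').deriv]
  exact div_neg_of_neg_of_pos (by nlinarith [hx.1]) (by positivity)

lemma pi_div_natCast_mem_Ioc {n : ℕ} (hn : 2 ≤ n) : π / n ∈ Ioc 0 (π / 2) :=
  ⟨by positivity, div_le_div_of_nonneg_left pi_pos.le two_pos (by exact_mod_cast hn)⟩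

/-- The sequence `k_n^−` is strictly increasing: for every `n ≥ 3`, `k_{n+1}^− > k_n^−`. -/
theorem knMinus_strictMono (n : ℕ) (hn : 3 ≤ n) : knMinus (n + 1) > knMinus n := by
  rw [knMinus_eq_profile, knMinus_eq_profile]
  have hlt : π / (n + 1 : ℕ) < π / n :=
    div_lt_div_of_pos_left pi_pos (by positivity) (by push_cast; linarith)
  exact mul_lt_mul_of_pos_left
    (strictAntiOn_knMinusProfile (pi_div_natCast_mem_Ioc (by omega))
      (pi_div_natCast_mem_Ioc (by omega)) hlt) (by positivity)
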